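/- Let d ≥ 1 and k ≥ 1 be integers, and let (a_i), (β_i) be integer sequences. For r with -1 ≤ r ≤ k define γ_{k,r} = ∏ β_i over indices i with k−r ≤ i ≤ k+r and i ≡ k+r (mod 2), with γ_{k,-1} = 1. Suppose d | a_k and for all 1 ≤ r ≤ k one has a_{k−r}·β_{k+r}·γ_{k,r−2} ≡ −a_{k+r}·γ_{k,r−1} (mod d). Then for all 0 ≤ r ≤ k, the product of 2×2 matrices C_{k+r}·C_{k+r−1}···C_{k−r}, where C_i = [[a_i, β_i],[1,0]], is congruent modulo d to the matrix [[0, γ_{k,r}],[γ_{k,r−1}, 0]]. -/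

import Mathlib

/-!
Writing `P_r` for the product, `P_{r+1} = C_{k+r+1} P_r C_{k-r-1}`. If
`P_r = [[0, γ_{k,r}], [γ_{k,r-1}, 0]]`, then `P_{r+1}` has first row
`[a_{k+r+1} γ_{k,r} + β_{k+r+1} γ_{k,r-1} a_{k-r-1}, β_{k+r+1} γ_{k,r-1} β_{k-r-1}]` and second row
`[γ_{k,r}, 0]`; the hypothesis makes the first entry vanish and the second one is `γ_{k,r+1}`.
The induction is an identity in any commutative ring in which the hypotheses hold, applied to
`ZMod |d|`.
-/

/-- `gam β k r` is `γ_{k, r-1}`: the product of `β i` over the `r` indices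
`i = k - r + 1, k - r + 3, …, k + r - 1` (so `gam β k 0 = γ_{k,-1} = 1`). -/
def gam (β : ℕ → ℤ) (k r : ℕ) : ℤ :=
  ∏ i ∈ Finset.range r, β (k + 1 - r + 2 * i)

/-- The matrix `C i = [[a i, β i],[1,0]]`. -/
def Cmat (a β : ℕ → ℤ) (i : ℕ) : Matrix (Fin 2) (Fin 2) ℤ :=
  !![a i, β i; 1, 0]

lemma gam_add_two (β : ℕ → ℤ) {k r : ℕ} (h : r + 1 ≤ k) :
    gam β k (r + 2) = β (k - (r + 1)) * gam β k r * β (k + (r + 1)) := by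
  unfold gam
  rw [Finset.prod_range_succ, Finset.prod_range_succ']
  have h_first : k + 1 - (r + 2) + 2 * 0 = k - (r + 1) := by omega
  have h_last : k + 1 - (r + 2) + 2 * (r + 1) = k + (r + 1) := by omega
  have h_mid : ∀ i ∈ Finset.range r,
      β (k + 1 - (r + 2) + 2 * (i + 1)) = β (k + 1 - r + 2 * i) := by
    intro i _
    congr 1
    omega
  rw [h_first, h_last, Finset.prod_congr rfl h_mid]
  ring

lemma prod_map_range_two_mul_succ_add_one {M : Type*} [Monoid M] (f : ℕ → M) (n : ℕ) :
    ((List.range (2 * (n + 1) + 1)).map f).prod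
      = f 0 * ((List.range (2 * n + 1)).map (fun m => f (m + 1))).prod * f (2 * n + 2) := by
  rw [show 2 * (n + 1) + 1 = 2 * n + 1 + 1 + 1 by ring, List.range_succ, List.range_succ_eq_map]
  simp [mul_assoc, Function.comp_def]

lemma prod_Cmat_succ (a β : ℕ → ℤ) (k r : ℕ) :
    ((List.range (2 * (r + 1) + 1)).map (fun m => Cmat a β (k + (r + 1) - m))).prod
      = Cmat a β (k + (r + 1))
        * ((List.range (2 * r + 1)).map (fun m => Cmat a β (k + r - m))).prod
        * Cmat a β (k - (r + 1)) := by
  have h_shift : ∀ m, k + (r + 1) - (m + 1) = k + r - m := by omega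
  have h_last : k + r - (2 * r + 1) = k - (r + 1) := by omega
  simp only [prod_map_range_two_mul_succ_add_one, Nat.sub_zero, h_shift, h_last]

lemma ZMod.intCast_natAbs_eq_iff {a b d : ℤ} : (a : ZMod d.natAbs) = b ↔ a ≡ b [ZMOD d] :=
  (ZMod.intCast_eq_intCast_iff a b _).trans Int.modEq_natAbs

theorem map_prod_Cmat {R : Type*} [CommRing R] (a β : ℕ → ℤ) (k : ℕ) (hak : (a k : R) = 0)
    (hrel : ∀ r : ℕ, 1 ≤ r → r ≤ k →
      ((a (k - r) * β (k + r) * gam β k (r - 1) : ℤ) : R) = ((-(a (k + r) * gam β k r) : ℤ) : R))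
    (r : ℕ) (hr : r ≤ k) :
    (Int.castRingHom R).mapMatrix
        ((List.range (2 * r + 1)).map (fun m => Cmat a β (k + r - m))).prod
      = (Int.castRingHom R).mapMatrix !![0, gam β k (r + 1); gam β k r, 0] := by
  induction r with
  | zero =>
    ext i j
    fin_cases i <;> fin_cases j <;> simp [Cmat, gam, hak]
  | succ r ih =>
    have h_rel := hrel (r + 1) (by omega) hr
    have h_gam := gam_add_two β hr
    push_cast [Nat.add_sub_cancel] at h_rel h_gam
    rw [prod_Cmat_succ, map_mul, map_mul, ih (by omega)]
    ext i j
    fin_cases i <;> fin_cases j <;> simp [Cmat, Matrix.mul_apply, h_gam]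
    · linear_combination h_rel
    · ring

theorem stmt0_general (d : ℤ) (a β : ℕ → ℤ) (k : ℕ)
    (hak : d ∣ a k)
    (hnice : ∀ r : ℕ, 1 ≤ r → r ≤ k →
      a (k - r) * β (k + r) * gam β k (r - 1) ≡ -(a (k + r) * gam β k r) [ZMOD d]) :
    ∀ r : ℕ, r ≤ k → ∀ i j : Fin 2,
      (((List.range (2 * r + 1)).map (fun m => Cmat a β (k + r - m))).prod i j)
        ≡ (!![0, gam β k (r + 1); gam β k r, 0] : Matrix (Fin 2) (Fin 2) ℤ) i j [ZMOD d] := by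
  intro r hr i j
  have h := map_prod_Cmat (R := ZMod d.natAbs) a β k
    ((ZMod.intCast_zmod_eq_zero_iff_dvd _ _).mpr (Int.natAbs_dvd.mpr hak))
    (fun r h1 h2 => ZMod.intCast_natAbs_eq_iff.mpr (hnice r h1 h2)) r hr
  exact ZMod.intCast_natAbs_eq_iff.mp (congrFun (congrFun h i) j)

theorem stmt0 (d : ℤ) (hd : 1 ≤ d) (a β : ℕ → ℤ) (k : ℕ) (hk : 1 ≤ k)
    (hak : d ∣ a k)
    (hnice : ∀ r : ℕ, 1 ≤ r → r ≤ k →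
      a (k - r) * β (k + r) * gam β k (r - 1) ≡ -(a (k + r) * gam β k r) [ZMOD d]) :
    ∀ r : ℕ, r ≤ k → ∀ i j : Fin 2,
      (((List.range (2 * r + 1)).map (fun m => Cmat a β (k + r - m))).prod i j)
        ≡ (!![0, gam β k (r + 1); gam β k r, 0] : Matrix (Fin 2) (Fin 2) ℤ) i j [ZMOD d] :=
  stmt0_general d a β k hak hnice
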